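/- arXiv:math/0703314 — 9 statements merged into one kernel-verified Lean document; each statement's English description precedes it below -/
import Mathlib

section
/- Let G be a group and K a normal subgroup of G of finite index. Then G is icc if and only if K is icc and for every g ∈ G, if the conjugation action of g on K is an inner automorphism of K (i.e. there exists h ∈ K with g⁻¹kg = h⁻¹kh for all k ∈ K), then g ∈ K (equivalently, the natural homomorphism θ : G/K → Out(K) is injective). -/
open Subgroup

section Helpers

variable {G : Type*} [Group G]

lemma classSet_eq_range (g : G) :
    {h : G | ∃ x : G, x⁻¹ * g * x = h} = Set.range (fun x : G => x * g * x⁻¹) := by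
  ext h
  constructor
  · rintro ⟨x, rfl⟩; exact ⟨x⁻¹, by group⟩
  · rintro ⟨x, rfl⟩; exact ⟨x⁻¹, by group⟩

lemma class_finite_iff (g : G) :
    {h : G | ∃ x : G, x⁻¹ * g * x = h}.Finite ↔
      (Subgroup.centralizer {g} : Subgroup G).FiniteIndex := by
  rw [classSet_eq_range]
  constructor
  · intro hfin
    let F : G ⧸ Subgroup.centralizer ({g} : Set G) → G := fun q => q.out * g * q.out⁻¹
    have hinj : Function.Injective F := by
      intro q1 q2 h
      simp only [F] at h
      have hmem : (q1.out)⁻¹ * q2.out ∈ Subgroup.centralizer ({g} : Set G) := by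
        rw [mem_centralizer_singleton_iff]
        calc q1.out⁻¹ * q2.out * g
            = q1.out⁻¹ * (q2.out * g * q2.out⁻¹) * q2.out := by group
          _ = q1.out⁻¹ * (q1.out * g * q1.out⁻¹) * q2.out := by rw [h]
          _ = g * (q1.out⁻¹ * q2.out) := by group
      have h2 : (QuotientGroup.mk q1.out : G ⧸ Subgroup.centralizer ({g} : Set G))
          = QuotientGroup.mk q2.out := QuotientGroup.eq.mpr hmem
      rwa [QuotientGroup.out_eq', QuotientGroup.out_eq'] at h2
    have hr : Set.Finite (Set.range F) := by
      apply hfin.subset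
      rintro _ ⟨q, rfl⟩
      exact ⟨q.out, rfl⟩
    haveI := hr.to_subtype
    haveI : Finite (G ⧸ Subgroup.centralizer ({g} : Set G)) :=
      Finite.of_injective_finite_range hinj
    exact Subgroup.finiteIndex_of_finite_quotient (H := Subgroup.centralizer ({g} : Set G))
  · intro hFI
    haveI := hFI
    have hsub : Set.range (fun x : G => x * g * x⁻¹) ⊆
        Set.range (fun q : G ⧸ Subgroup.centralizer ({g} : Set G) => q.out * g * q.out⁻¹) := by
      rintro _ ⟨x, rfl⟩
      refine ⟨QuotientGroup.mk x, ?_⟩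
      obtain ⟨h, hh⟩ := QuotientGroup.mk_out_eq_mul (Subgroup.centralizer ({g} : Set G)) x
      dsimp only
      rw [hh]
      have hc : (h : G) * g = g * h := mem_centralizer_singleton_iff.mp h.2
      calc (x * (h : G)) * g * (x * (h : G))⁻¹
          = x * ((h : G) * g * (h : G)⁻¹) * x⁻¹ := by group
        _ = x * (g * (h : G) * (h : G)⁻¹) * x⁻¹ := by rw [hc]
        _ = x * g * x⁻¹ := by group
    exact (Set.finite_range _).subset hsub

lemma classSet_conj (g k : G) :
    {h : G | ∃ x : G, x⁻¹ * (k * g * k⁻¹) * x = h} = {h : G | ∃ x : G, x⁻¹ * g * x = h} := by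
  ext h
  constructor
  · rintro ⟨x, rfl⟩; exact ⟨k⁻¹ * x, by group⟩
  · rintro ⟨x, rfl⟩; exact ⟨k * x, by group⟩

end Helpers

/-- A group is *icc* (with infinite conjugacy classes) if it is nontrivial and the
conjugacy class of every nontrivial element is infinite. -/
def IsICC (G : Type*) [Group G] : Prop :=
  Nontrivial G ∧ ∀ g : G, g ≠ 1 → {h : G | ∃ x : G, x⁻¹ * g * x = h}.Infinite

/-- Main theorem: for a finite-index normal subgroup K of G, G is icc iff K is icc and
every g whose conjugation action on K is inner lies in K (θ : G/K → Out K injective). -/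
theorem stmt_0 {G : Type*} [Group G] (K : Subgroup G) [K.Normal] [K.FiniteIndex] :
    IsICC G ↔ IsICC K ∧
      ∀ g : G, (∃ h ∈ K, ∀ k ∈ K, g⁻¹ * k * g = h⁻¹ * k * h) → g ∈ K := by
  constructor
  · intro hG
    have hKnontriv : Nontrivial K := by
      rw [Subgroup.nontrivial_iff_ne_bot]
      intro hbot
      haveI := hG.1
      obtain ⟨g, hg⟩ := exists_ne (1 : G)
      have hidx : K.index ≠ 0 := Subgroup.FiniteIndex.index_ne_zero
      rw [hbot, Subgroup.index_bot] at hidx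
      haveI : Finite G := (Nat.card_ne_zero.mp hidx).2
      exact hG.2 g hg (Set.toFinite _)
    refine ⟨⟨hKnontriv, ?_⟩, ?_⟩
    · intro c hc hFin
      have hcG : (c : G) ≠ 1 := fun hh => hc (Subtype.ext hh)
      have hAfin : {z : G | ∃ t ∈ K, t⁻¹ * (c : G) * t = z}.Finite := by
        have hss : {z : G | ∃ t ∈ K, t⁻¹ * (c : G) * t = z} ⊆
            Subtype.val '' {h : ↥K | ∃ x : ↥K, x⁻¹ * c * x = h} := by
          rintro z ⟨t, ht, rfl⟩
          exact ⟨(⟨t, ht⟩ : ↥K)⁻¹ * c * ⟨t, ht⟩, ⟨⟨t, ht⟩, rfl⟩, rfl⟩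
        exact (hFin.image _).subset hss
      have hGclass : {h : G | ∃ x : G, x⁻¹ * (c : G) * x = h}.Finite := by
        have hcover : {h : G | ∃ x : G, x⁻¹ * (c : G) * x = h} ⊆
            ⋃ q : G ⧸ K, (fun z => (Quotient.out q)⁻¹ * z * Quotient.out q) ''
              {z : G | ∃ t ∈ K, t⁻¹ * (c : G) * t = z} := by
          rintro _ ⟨x, rfl⟩
          apply Set.mem_iUnion.mpr
          refine ⟨QuotientGroup.mk x, ?_⟩
          obtain ⟨h, hh⟩ := QuotientGroup.mk_out_eq_mul K x
          set r := (QuotientGroup.mk x : G ⧸ K).out with hrdef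
          have hx : x = r * (h : G)⁻¹ := by rw [hh]; group
          have htK : r * (h : G)⁻¹ * r⁻¹ ∈ K :=
            Subgroup.Normal.conj_mem ‹K.Normal› _ (K.inv_mem h.2) r
          refine ⟨(r * (h : G)⁻¹ * r⁻¹)⁻¹ * (c : G) * (r * (h : G)⁻¹ * r⁻¹),
            ⟨r * (h : G)⁻¹ * r⁻¹, htK, rfl⟩, ?_⟩
          dsimp only
          rw [hx]
          group
        exact Set.Finite.subset (Set.finite_iUnion (fun q => hAfin.image _)) hcover
      exact hG.2 _ hcG hGclass
    · rintro g ⟨h, hhK, hconj⟩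
      have hcent : K ≤ Subgroup.centralizer {g * h⁻¹} := by
        intro k hk
        rw [mem_centralizer_singleton_iff]
        have hck := hconj k hk
        calc k * (g * h⁻¹) = g * (g⁻¹ * k * g) * h⁻¹ := by group
          _ = g * (h⁻¹ * k * h) * h⁻¹ := by rw [hck]
          _ = (g * h⁻¹) * k := by group
      have hfi : (Subgroup.centralizer {g * h⁻¹}).FiniteIndex :=
        Subgroup.finiteIndex_of_le hcent
      have h1 : g * h⁻¹ = 1 := by
        by_contra hne
        exact hG.2 _ hne ((class_finite_iff _).mpr hfi)
      exact (mul_inv_eq_one.mp h1) ▸ hhK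
  · rintro ⟨⟨hKnt, hKicc⟩, hθ⟩
    haveI := hKnt
    have hGnt : Nontrivial G := by
      obtain ⟨k, hk⟩ := exists_ne (1 : ↥K)
      exact ⟨(k : G), 1, fun hh => hk (Subtype.ext hh)⟩
    refine ⟨hGnt, ?_⟩
    intro g hg hFin
    haveI hCfi : (Subgroup.centralizer ({g} : Set G)).FiniteIndex :=
      (class_finite_iff g).mp hFin
    have hgK : g ∈ K := by
      apply hθ g
      refine ⟨1, K.one_mem, ?_⟩
      intro k hk
      have hck : g⁻¹ * k * g * k⁻¹ ∈ K :=
        K.mul_mem (Subgroup.Normal.conj_mem' ‹K.Normal› k hk g) (K.inv_mem hk)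
      haveI hCk : (Subgroup.centralizer ({k * g * k⁻¹} : Set G)).FiniteIndex := by
        apply (class_finite_iff _).mp
        rw [classSet_conj]
        exact hFin
      haveI hsof : (((Subgroup.centralizer ({g} : Set G)) ⊓
          (Subgroup.centralizer ({k * g * k⁻¹} : Set G))).subgroupOf K).FiniteIndex :=
        inferInstance
      set c : ↥K := ⟨g⁻¹ * k * g * k⁻¹, hck⟩ with hcdef
      have hle : ((Subgroup.centralizer ({g} : Set G)) ⊓
          (Subgroup.centralizer ({k * g * k⁻¹} : Set G))).subgroupOf K ≤
          Subgroup.centralizer ({c} : Set ↥K) := by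
        intro x hx
        rw [mem_centralizer_singleton_iff]
        have hx' : (x : G) ∈ (Subgroup.centralizer ({g} : Set G)) ⊓
            (Subgroup.centralizer ({k * g * k⁻¹} : Set G)) := Subgroup.mem_subgroupOf.mp hx
        have hx1 := mem_centralizer_singleton_iff.mp (Subgroup.mem_inf.mp hx').1
        have hx2 := mem_centralizer_singleton_iff.mp (Subgroup.mem_inf.mp hx').2
        rw [Subtype.ext_iff]
        show (x : G) * (g⁻¹ * k * g * k⁻¹) = (g⁻¹ * k * g * k⁻¹) * x
        have hx1' : (x : G) * g⁻¹ = g⁻¹ * x := Commute.inv_right hx1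
        calc (x : G) * (g⁻¹ * k * g * k⁻¹)
            = ((x : G) * g⁻¹) * (k * g * k⁻¹) := by group
          _ = (g⁻¹ * (x : G)) * (k * g * k⁻¹) := by rw [hx1']
          _ = g⁻¹ * ((x : G) * (k * g * k⁻¹)) := by group
          _ = g⁻¹ * ((k * g * k⁻¹) * (x : G)) := by rw [hx2]
          _ = (g⁻¹ * k * g * k⁻¹) * x := by group
      have hcfi : (Subgroup.centralizer ({c} : Set ↥K)).FiniteIndex :=
        Subgroup.finiteIndex_of_le hle
      have hc1 : c = 1 := by
        by_contra hne
        exact hKicc c hne ((class_finite_iff c).mpr hcfi)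
      have hval : g⁻¹ * k * g * k⁻¹ = 1 := by
        have := Subtype.ext_iff.mp hc1
        simpa [hcdef] using this
      rw [mul_inv_eq_one] at hval
      simpa using hval
    have hKclassInf := hKicc ⟨g, hgK⟩ (fun hh => hg (Subtype.ext_iff.mp hh))
    apply hKclassInf
    have hss : Subtype.val '' {h : ↥K | ∃ x : ↥K, x⁻¹ * ⟨g, hgK⟩ * x = h} ⊆
        {h : G | ∃ x : G, x⁻¹ * g * x = h} := by
      rintro _ ⟨y, ⟨x, rfl⟩, rfl⟩
      exact ⟨(x : G), rfl⟩
    exact Set.Finite.of_finite_image (hFin.subset hss) (Subtype.val_injective.injOn)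
end

section
/- Let G be a group and K a subgroup of G of finite index. If G is icc then K is icc. Equivalently, if K is not icc then G is not icc. -/
/-- If G is icc then any finite-index subgroup K is icc. -/
theorem stmt_1 {G : Type*} [Group G] (K : Subgroup G) [K.FiniteIndex]
    (hG : IsICC G) : IsICC K := by
  obtain ⟨hnt, hcl⟩ := hG
  -- G is infinite
  have hGinf : Infinite G := by
    obtain ⟨g, hg⟩ := exists_ne (1 : G)
    have h := hcl g hg
    have := Set.infinite_coe_iff.mpr h
    exact Infinite.of_injective (Subtype.val : {h : G | ∃ x : G, x⁻¹ * g * x = h} → G)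
      Subtype.val_injective
  -- K is infinite, hence nontrivial
  have hKinf : Infinite K := by
    have h := Subgroup.index_mul_card K
    have hG0 : Nat.card G = 0 := Nat.card_eq_zero_of_infinite
    have hi : K.index ≠ 0 := Subgroup.FiniteIndex.index_ne_zero
    have hK0 : Nat.card K = 0 := by
      rcases Nat.mul_eq_zero.mp (h.trans hG0) with h' | h'
      · exact absurd h' hi
      · exact h'
    rcases Nat.card_eq_zero.mp hK0 with h' | h'
    · exact (h'.false (1 : K)).elim
    · exact h'
  refine ⟨inferInstance, ?_⟩
  intro g hg
  have hg' : (g : G) ≠ 1 := fun h => hg (Subtype.ext h)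
  have hGcl := hcl g hg'
  set S : Set G := {h : G | ∃ k : K, (k : G)⁻¹ * g * k = h} with hS
  -- finitely many right cosets
  have hQfin : Finite (Quotient (QuotientGroup.rightRel K)) := by
    have h1 : Finite (G ⧸ K) :=
      Nat.finite_of_card_ne_zero Subgroup.FiniteIndex.index_ne_zero
    exact Finite.of_equiv _ (QuotientGroup.quotientRightRelEquivQuotientLeftRel K).symm
  -- the G-class is covered by translates of S
  have hcover : {h : G | ∃ x : G, x⁻¹ * (g : G) * x = h} ⊆
      ⋃ q : Quotient (QuotientGroup.rightRel K),
        (fun h => (Quotient.out q)⁻¹ * h * Quotient.out q) '' S := by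
    rintro h ⟨x, rfl⟩
    refine Set.mem_iUnion.mpr ⟨Quotient.mk _ x, ?_⟩
    set r := (Quotient.mk (QuotientGroup.rightRel K) x).out with hr
    have hrx : x * r⁻¹ ∈ K := by
      have h1 := Quotient.exact
        (Quotient.out_eq (Quotient.mk (QuotientGroup.rightRel K) x))
      exact (QuotientGroup.rightRel_apply).mp h1
    refine ⟨((⟨x * r⁻¹, hrx⟩ : K) : G)⁻¹ * g * (⟨x * r⁻¹, hrx⟩ : K), ⟨⟨x * r⁻¹, hrx⟩, rfl⟩, ?_⟩
    simp only []
    group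
  -- S is infinite
  have hSinf : S.Infinite := by
    by_contra hfinS
    rw [Set.not_infinite] at hfinS
    have hU : (⋃ q : Quotient (QuotientGroup.rightRel K),
        (fun h => (Quotient.out q)⁻¹ * h * Quotient.out q) '' S).Finite :=
      Set.finite_iUnion fun q => hfinS.image _
    exact hGcl (hU.subset hcover)
  -- identify S as the image of the K-class
  have himg : S = Subtype.val '' {h : K | ∃ x : K, x⁻¹ * g * x = h} := by
    ext h
    constructor
    · rintro ⟨k, rfl⟩
      exact ⟨k⁻¹ * g * k, ⟨k, rfl⟩, by push_cast; ring_nf⟩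
    · rintro ⟨t, ⟨x, rfl⟩, rfl⟩
      exact ⟨x, by push_cast; ring_nf⟩
  rw [himg] at hSinf
  exact hSinf.of_image _
end

section
/- Let G be a group and K a normal subgroup of G of finite index. If there exist g ∈ G \ K and h ∈ K such that g⁻¹kg = h⁻¹kh for all k ∈ K (i.e. the natural homomorphism θ : G/K → Out(K) is not injective), then G is not icc. -/
/-- If some g ∉ K acts on the finite-index normal subgroup K as an inner automorphism,
then G is not icc. -/
theorem stmt_2 {G : Type*} [Group G] (K : Subgroup G) [K.Normal] [K.FiniteIndex]
    (hg : ∃ g : G, g ∉ K ∧ ∃ h ∈ K, ∀ k ∈ K, g⁻¹ * k * g = h⁻¹ * k * h) :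
    ¬ IsICC G := by
  rintro ⟨_, hicc⟩
  obtain ⟨g, hgK, h, hhK, hcomm⟩ := hg
  set c := g * h⁻¹ with hc
  have hcK : c ∉ K := fun hcK => hgK (by simpa [hc] using K.mul_mem hcK hhK)
  have hc1 : c ≠ 1 := fun h1 => hcK (h1 ▸ K.one_mem)
  have hcent : ∀ k ∈ K, c * k = k * c := by
    intro k hk
    have h2 : k * g = g * h⁻¹ * k * h := by
      calc k * g = g * (g⁻¹ * k * g) := by group
        _ = g * (h⁻¹ * k * h) := by rw [hcomm k hk]
        _ = g * h⁻¹ * k * h := by group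
    calc c * k = (g * h⁻¹ * k * h) * h⁻¹ := by rw [hc]; group
      _ = (k * g) * h⁻¹ := by rw [h2]
      _ = k * c := by rw [hc, mul_assoc]
  -- conjugates of c factor through the quotient G ⧸ K
  have wd : ∀ a b : G, @Setoid.r _ (QuotientGroup.leftRel K) a b → a⁻¹ * c * a = b⁻¹ * c * b := by
    intro a b hab
    rw [QuotientGroup.leftRel_apply] at hab
    have hb : b = a * (a⁻¹ * b) := by group
    set k := a⁻¹ * b with hk
    have hk' : a * k * a⁻¹ ∈ K := Subgroup.Normal.conj_mem ‹K.Normal› k hab a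
    have : c * (a * k * a⁻¹) = (a * k * a⁻¹) * c := hcent _ hk'
    calc a⁻¹ * c * a = k⁻¹ * (a⁻¹ * ((a * k * a⁻¹) * c) * a) := by group
      _ = k⁻¹ * (a⁻¹ * (c * (a * k * a⁻¹)) * a) := by rw [this]
      _ = (a * k)⁻¹ * c * (a * k) := by group
      _ = b⁻¹ * c * b := by rw [← hb]
  let f : G ⧸ K → G := fun q => Quotient.liftOn' q (fun x => x⁻¹ * c * x) wd
  have hsub : {h : G | ∃ x : G, x⁻¹ * c * x = h} ⊆ Set.range f := by
    rintro s ⟨x, rfl⟩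
    exact ⟨QuotientGroup.mk x, rfl⟩
  exact hicc c hc1 ((Set.finite_range f).subset hsub)
end

section
/- Let G be a group and K a normal subgroup of G of finite index. If G is not icc, then either K is not icc, or there exist g ∈ G \ K and h ∈ K such that g⁻¹kg = h⁻¹kh for all k ∈ K (i.e. the natural homomorphism θ : G/K → Out(K) is not injective). -/
/-!
If `g` has a finite conjugacy class `S`, then every conjugate `x⁻¹ ⁅g, k⁆ x` of a commutator
has the form `a * b⁻¹` with `a, b ∈ S`, so all commutators `⁅g, k⁆` have finite conjugacy
classes as well. For `k` in a normal icc subgroup `K`, the commutator `⁅g, k⁆` lies in `K`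
and its `K`-class is finite, hence `⁅g, k⁆ = 1`: the element `g` centralizes `K`. If moreover
nothing outside `K` centralizes `K`, then `g ∈ K`, and `K` being icc forces `g = 1`.
-/

open scoped commutatorElement

section FiniteConjClass

variable {G : Type*} [Group G]

lemma finite_conjClass_commutatorElement {g : G}
    (hg : (Set.range fun x : G => x⁻¹ * g * x).Finite) (k : G) :
    (Set.range fun x : G => x⁻¹ * ⁅g, k⁆ * x).Finite := by
  refine (hg.image2 (fun a b => a * b⁻¹) hg).subset ?_
  rintro _ ⟨x, rfl⟩
  exact ⟨x⁻¹ * g * x, ⟨x, rfl⟩, (k⁻¹ * x)⁻¹ * g * (k⁻¹ * x), ⟨k⁻¹ * x, rfl⟩,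
    by simp only [commutatorElement_def]; group⟩

lemma finite_conjClass_subgroup {K : Subgroup G} {t : K}
    (ht : (Set.range fun x : G => x⁻¹ * (t : G) * x).Finite) :
    (Set.range fun x : K => x⁻¹ * t * x).Finite := by
  refine (ht.preimage Subtype.val_injective.injOn).subset ?_
  rintro _ ⟨x, rfl⟩
  exact ⟨x, rfl⟩

end FiniteConjClass

section NormalSubgroup

variable {G : Type*} [Group G] {K : Subgroup G} [K.Normal]

lemma mem_centralizer_of_finite_conjClass (hK : IsICC K) {g : G}
    (hg : (Set.range fun x : G => x⁻¹ * g * x).Finite) : g ∈ Subgroup.centralizer K := by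
  intro k hk
  have hcomm : ⁅g, k⁆ ∈ K :=
    K.mul_mem (‹K.Normal›.conj_mem k hk g) (K.inv_mem hk)
  have hfin := finite_conjClass_subgroup (t := ⟨⁅g, k⁆, hcomm⟩)
    (finite_conjClass_commutatorElement hg k)
  have htriv : (⟨⁅g, k⁆, hcomm⟩ : K) = 1 := by
    by_contra hne
    exact hK.2 _ hne hfin
  exact (commutatorElement_eq_one_iff_mul_comm.mp (congrArg Subtype.val htriv)).symm

lemma isICC_of_centralizer_le (hK : IsICC K) (hC : Subgroup.centralizer K ≤ K) : IsICC G := by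
  have := hK.1
  refine ⟨(Subtype.val_injective (p := (· ∈ K))).nontrivial, fun g hg1 hfin => ?_⟩
  have hgK : g ∈ K := hC (mem_centralizer_of_finite_conjClass hK hfin)
  have hne : (⟨g, hgK⟩ : K) ≠ 1 := fun h => hg1 (congrArg Subtype.val h)
  exact hK.2 _ hne (finite_conjClass_subgroup (t := ⟨g, hgK⟩) hfin)

end NormalSubgroup

theorem stmt_3_general {G : Type*} [Group G] (K : Subgroup G) [K.Normal]
    (hG : ¬ IsICC G) :
    ¬ IsICC K ∨ ∃ g : G, g ∉ K ∧ ∃ h ∈ K, ∀ k ∈ K, g⁻¹ * k * g = h⁻¹ * k * h := by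
  refine or_iff_not_imp_left.mpr fun hK => ?_
  by_contra hout
  refine hG (isICC_of_centralizer_le (not_not.mp hK) fun g hg => ?_)
  by_contra hgK
  refine hout ⟨g, hgK, 1, K.one_mem, fun k hk => ?_⟩
  rw [inv_one, one_mul, mul_one, mul_assoc, hg k hk, inv_mul_cancel_left]

/-- If G is not icc then either K is not icc or some g ∉ K acts on K as an inner
automorphism. -/
theorem stmt_3 {G : Type*} [Group G] (K : Subgroup G) [K.Normal] [K.FiniteIndex]
    (hG : ¬ IsICC G) :
    ¬ IsICC K ∨ ∃ g : G, g ∉ K ∧ ∃ h ∈ K, ∀ k ∈ K, g⁻¹ * k * g = h⁻¹ * k * h :=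
  stmt_3_general K hG
end

section
/- Let G be a group, H a subgroup of G of finite index, and N(H) = ⋂_{g ∈ G} g⁻¹Hg the normal core of H in G. Then G is not icc if and only if at least one of the following holds: (i) H is not icc; (ii) there exists g ∈ G \ H with g ≠ 1 of finite order such that g⁻¹kg = k for all k ∈ N(H); (iii) there exists g ∈ G \ H with g ≠ 1 of finite order and some h ∈ N(H) such that g⁻¹kg = h⁻¹kh for all k ∈ N(H). -/
open Subgroup

section

variable {G : Type*} [Group G]

theorem setOf_conj_eq_conjugatesOf (g : G) :
    {h : G | ∃ x : G, x⁻¹ * g * x = h} = conjugatesOf g := by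
  ext h
  change (∃ x, _) ↔ IsConj g h
  rw [isConj_iff]
  exact ⟨fun ⟨x, hx⟩ => ⟨x⁻¹, by rwa [inv_inv]⟩, fun ⟨c, hc⟩ => ⟨c⁻¹, by rwa [inv_inv]⟩⟩

theorem conjugatesOf_finite_iff_finiteIndex_centralizer (g : G) :
    (conjugatesOf g).Finite ↔ (centralizer {g}).FiniteIndex := by
  have horbit : MulAction.orbit (ConjAct G) g = conjugatesOf g :=
    Set.ext fun _ => ConjAct.mem_orbit_conjAct.trans isConj_comm
  have hindex : (centralizer {g}).index = (conjugatesOf g).ncard := by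
    rw [← horbit, ← MulAction.index_stabilizer, centralizer_eq_comap_stabilizer]
    exact index_comap_of_surjective _ ConjAct.toConjAct.surjective
  rw [finiteIndex_iff, hindex]
  exact ⟨fun hfin => ((Set.ncard_pos hfin).mpr ⟨g, mem_conjugatesOf_self⟩).ne',
    Set.finite_of_ncard_ne_zero⟩

theorem conjugatesOf_finite_of_le_centralizer {K : Subgroup G} [K.FiniteIndex] {g : G}
    (hK : K ≤ centralizer {g}) : (conjugatesOf g).Finite :=
  (conjugatesOf_finite_iff_finiteIndex_centralizer g).mpr (finiteIndex_of_le hK)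

variable (G) in
def fcCenter : Subgroup G where
  carrier := {g | (conjugatesOf g).Finite}
  one_mem' := conjugatesOf_finite_of_le_centralizer (K := ⊤) fun c _ =>
    mem_centralizer_singleton_iff.mpr (by rw [one_mul, mul_one])
  mul_mem' {a b} ha hb := by
    have := (conjugatesOf_finite_iff_finiteIndex_centralizer a).mp ha
    have := (conjugatesOf_finite_iff_finiteIndex_centralizer b).mp hb
    refine conjugatesOf_finite_of_le_centralizer (K := centralizer {a} ⊓ centralizer {b})
      fun c ⟨hca, hcb⟩ => mem_centralizer_singleton_iff.mpr ?_
    rw [← mul_assoc, mem_centralizer_singleton_iff.mp hca, mul_assoc,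
      mem_centralizer_singleton_iff.mp hcb, mul_assoc]
  inv_mem' {a} ha := by
    have := (conjugatesOf_finite_iff_finiteIndex_centralizer a).mp ha
    exact conjugatesOf_finite_of_le_centralizer (K := centralizer {a}) fun c hc =>
      mem_centralizer_singleton_iff.mpr
        (show Commute c a from mem_centralizer_singleton_iff.mp hc).inv_right.eq

theorem mem_fcCenter {g : G} : g ∈ fcCenter G ↔ (conjugatesOf g).Finite := Iff.rfl

instance fcCenter_normal : (fcCenter G).Normal where
  conj_mem g hg x := by
    rw [mem_fcCenter, ← (isConj_iff.mpr ⟨x, rfl⟩).conjugatesOf_eq]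
    exact hg

theorem finiteIndex_of_finiteIndex_subgroupOf {C K : Subgroup G} [K.FiniteIndex]
    [(C.subgroupOf K).FiniteIndex] : C.FiniteIndex := by
  have : (C ⊓ K).FiniteIndex := by
    rw [finiteIndex_iff, ← relIndex_top_right, ← relIndex_inf_mul_relIndex, inf_top_eq,
      relIndex_top_right]
    exact mul_ne_zero (FiniteIndex.index_ne_zero (H := C.subgroupOf K)) FiniteIndex.index_ne_zero
  exact finiteIndex_of_le (inf_le_left : C ⊓ K ≤ C)

theorem centralizer_singleton_subgroupOf {K : Subgroup G} (b : K) :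
    (centralizer {(b : G)}).subgroupOf K = centralizer {b} := by
  ext c
  simp only [mem_subgroupOf, mem_centralizer_singleton_iff, Subtype.ext_iff, coe_mul]

theorem coe_mem_fcCenter_iff {K : Subgroup G} [K.FiniteIndex] {b : K} :
    (b : G) ∈ fcCenter G ↔ b ∈ fcCenter K := by
  rw [mem_fcCenter, mem_fcCenter, conjugatesOf_finite_iff_finiteIndex_centralizer,
    conjugatesOf_finite_iff_finiteIndex_centralizer, ← centralizer_singleton_subgroupOf]
  exact ⟨fun _ => inferInstance, fun _ => finiteIndex_of_finiteIndex_subgroupOf (K := K)⟩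

theorem finite_of_disjoint_of_finiteIndex {H K : Subgroup G} [H.FiniteIndex]
    (hHK : Disjoint H K) : Finite K := by
  have hrel : H.relIndex K = Nat.card K := by
    rw [relIndex, subgroupOf_eq_bot.mpr hHK, index_bot]
  exact Nat.finite_of_card_ne_zero
    (hrel ▸ (isFiniteRelIndex_of_finiteIndex (K := K)).relIndex_ne_zero)

theorem isICC_iff_fcCenter_eq_bot : IsICC G ↔ Nontrivial G ∧ fcCenter G = ⊥ := by
  simp only [IsICC, setOf_conj_eq_conjugatesOf, eq_bot_iff_forall, mem_fcCenter]
  exact and_congr_right fun _ => forall_congr' fun g => not_imp_not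

theorem IsICC.infinite (hG : IsICC G) : Infinite G := by
  obtain ⟨_, hbot⟩ := isICC_iff_fcCenter_eq_bot.mp hG
  obtain ⟨g, hg⟩ := exists_ne (1 : G)
  exact not_finite_iff_infinite.mp fun _ =>
    hg ((eq_bot_iff_forall _).mp hbot g (Set.toFinite _))

theorem IsICC.subgroup_of_finiteIndex (hG : IsICC G) (H : Subgroup G) [H.FiniteIndex] :
    IsICC H := by
  have : Infinite H := by
    have := hG.infinite
    rw [← not_finite_iff_infinite, finite_iff_finite_and_finiteIndex H] at *
    tauto
  rw [isICC_iff_fcCenter_eq_bot] at hG ⊢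
  refine ⟨inferInstance, (eq_bot_iff_forall _).mpr fun b hb => Subtype.ext ?_⟩
  exact (eq_bot_iff_forall _).mp hG.2 _ (coe_mem_fcCenter_iff.mpr hb)

theorem mul_inv_mem_fcCenter_of_conj_eq {K : Subgroup G} [K.FiniteIndex] {g h : G}
    (hc : ∀ k ∈ K, g⁻¹ * k * g = h⁻¹ * k * h) : g * h⁻¹ ∈ fcCenter G := by
  refine conjugatesOf_finite_of_le_centralizer (K := K) fun k hk => ?_
  rw [mem_centralizer_singleton_iff]
  calc k * (g * h⁻¹) = g * (g⁻¹ * k * g) * h⁻¹ := by group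
    _ = g * h⁻¹ * k := by rw [hc k hk]; group

theorem not_isICC_of_conj_eq {K : Subgroup G} [K.FiniteIndex] {g h : G} (hg : g ∉ K)
    (hh : h ∈ K) (hc : ∀ k ∈ K, g⁻¹ * k * g = h⁻¹ * k * h) : ¬IsICC G := by
  rw [isICC_iff_fcCenter_eq_bot, eq_bot_iff_forall]
  rintro ⟨-, hbot⟩
  have : g = h := mul_inv_eq_one.mp (hbot _ (mul_inv_mem_fcCenter_of_conj_eq hc))
  exact hg (this ▸ hh)

theorem disjoint_fcCenter_of_isICC {H : Subgroup G} [H.FiniteIndex] (hH : IsICC H) :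
    Disjoint H (fcCenter G) := by
  rw [disjoint_def]
  intro b hbH hb
  have hbot := ((isICC_iff_fcCenter_eq_bot.mp hH).2 ▸ coe_mem_fcCenter_iff.mp hb :
    (⟨b, hbH⟩ : H) ∈ (⊥ : Subgroup H))
  exact congrArg Subtype.val (mem_bot.mp hbot)

theorem exists_isOfFinOrder_commute_normalCore_of_not_isICC {H : Subgroup G} [H.FiniteIndex]
    (hG : ¬IsICC G) (hH : IsICC H) :
    ∃ g : G, g ∉ H ∧ g ≠ 1 ∧ IsOfFinOrder g ∧ ∀ k ∈ H.normalCore, g⁻¹ * k * g = k := by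
  have : Nontrivial G := haveI := hH.1; H.subtype_injective.nontrivial
  have hne : fcCenter G ≠ ⊥ := fun hbot => hG (isICC_iff_fcCenter_eq_bot.mpr ⟨this, hbot⟩)
  have hdisj := disjoint_fcCenter_of_isICC hH
  have := finite_of_disjoint_of_finiteIndex hdisj
  obtain ⟨⟨a, ha⟩, ha1⟩ := ne_bot_iff_exists_ne_one.mp hne
  have hcomm : ∀ k ∈ H.normalCore, Commute a k := fun k hk =>
    commute_of_normal_of_disjoint _ _ inferInstance H.normalCore_normal
      (hdisj.symm.mono_right H.normalCore_le) a k ha hk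
  exact ⟨a, fun haH => ha1 (Subtype.ext (disjoint_def.mp hdisj haH ha)),
    fun h => ha1 (Subtype.ext h),
    (fcCenter G).subtype.isOfFinOrder (isOfFinOrder_of_finite (⟨a, ha⟩ : fcCenter G)),
    fun k hk => by rw [mul_assoc, ← (hcomm k hk).eq, inv_mul_cancel_left]⟩

end

/-- Theorem 1: G is not icc iff (i) H is not icc, or (ii) some torsion g ∉ H centralizes
the normal core of H, or (iii) some torsion g ∉ H acts on the normal core as an inner
automorphism of it. -/
theorem stmt_5 {G : Type*} [Group G] (H : Subgroup G) [H.FiniteIndex] :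
    ¬ IsICC G ↔
      (¬ IsICC H ∨
        (∃ g : G, g ∉ H ∧ g ≠ 1 ∧ IsOfFinOrder g ∧
          ∀ k ∈ H.normalCore, g⁻¹ * k * g = k) ∨
        (∃ g : G, g ∉ H ∧ g ≠ 1 ∧ IsOfFinOrder g ∧
          ∃ h ∈ H.normalCore, ∀ k ∈ H.normalCore, g⁻¹ * k * g = h⁻¹ * k * h)) := by
  constructor
  · intro hG
    rw [or_iff_not_imp_left, not_not]
    exact fun hH => Or.inl (exists_isOfFinOrder_commute_normalCore_of_not_isICC hG hH)
  · have hcore : ∀ {g : G}, g ∉ H → g ∉ H.normalCore := fun hg hN => hg (H.normalCore_le hN)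
    rintro (hH | ⟨g, hgH, -, -, hg⟩ | ⟨g, hgH, -, -, h, hh, hg⟩)
    · exact fun hG => hH (hG.subgroup_of_finiteIndex H)
    · exact not_isICC_of_conj_eq (hcore hgH) (one_mem _) fun k hk => by rw [hg k hk]; group
    · exact not_isICC_of_conj_eq (hcore hgH) hh hg
end

section
/- Let G be a group, H a subgroup of G of finite index, and N(H) = ⋂_{g ∈ G} g⁻¹Hg the normal core of H in G. Suppose there exists g ∈ G \ H with g ≠ 1 of finite order and some h ∈ N(H) such that g⁻¹kg = h⁻¹kh for all k ∈ N(H). Then either H is not icc, or there exists g' ∈ G \ H with g' ≠ 1 of finite order such that g'⁻¹kg' = k for all k ∈ N(H). -/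
/-- From `a⁻¹ * b * a = b` deduce `b * a = a * b`. -/
lemma comm_of_conj {G : Type*} [Group G] {a b : G} (h : a⁻¹ * b * a = b) : b * a = a * b := by
  have := congrArg (fun t => a * t) h
  simpa [mul_assoc] using this

/-- If `z ∈ H` centralizes the normal core of `H` (a finite-index subgroup), then the
conjugacy class of `z` in `H` is finite. -/
lemma conjClass_finite_of_centralizes {G : Type*} [Group G] (H : Subgroup G) [H.FiniteIndex]
    (z : H) (hz : ∀ k ∈ H.normalCore, (z : G)⁻¹ * k * z = k) :
    {w : H | ∃ x : H, x⁻¹ * z * x = w}.Finite := by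
  set K : Subgroup H := H.normalCore.subgroupOf H with hK
  have hcomm : ∀ (x : H) (n : H), (n : G) ∈ H.normalCore →
      x⁻¹ * z * x * n = n * (x⁻¹ * z * x) := by
    intro x n hn
    have h1 : ((x : G) * n * (x : G)⁻¹) ∈ H.normalCore :=
      (Subgroup.normalCore_normal H).conj_mem _ hn _
    have hzc : ((x : G) * n * (x : G)⁻¹) * z = (z : G) * ((x : G) * n * (x : G)⁻¹) :=
      comm_of_conj (hz _ h1)
    ext
    push_cast
    calc (x : G)⁻¹ * z * x * n
        = (x : G)⁻¹ * (z * ((x : G) * n * (x : G)⁻¹)) * x := by group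
      _ = (x : G)⁻¹ * (((x : G) * n * (x : G)⁻¹) * z) * x := by rw [hzc]
      _ = (n : G) * ((x : G)⁻¹ * z * x) := by group
  -- the conjugation map factors through the finite quotient H ⧸ K
  have hlift : ∀ x y : H, (QuotientGroup.leftRel K) x y →
      x⁻¹ * z * x = y⁻¹ * z * y := by
    intro x y hxy
    rw [QuotientGroup.leftRel_apply] at hxy
    set n : H := x⁻¹ * y with hn
    have hnK : (n : G) ∈ H.normalCore := hxy
    have hy : y = x * n := by simp [hn]
    rw [hy]
    have := hcomm x n hnK
    calc x⁻¹ * z * x = n⁻¹ * (x⁻¹ * z * x * n) := by rw [this]; group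
      _ = (x * n)⁻¹ * z * (x * n) := by group
  let F : (H ⧸ K) → H := Quotient.lift (fun x : H => x⁻¹ * z * x) hlift
  have : {w : H | ∃ x : H, x⁻¹ * z * x = w} ⊆ Set.range F := by
    rintro w ⟨x, rfl⟩
    exact ⟨QuotientGroup.mk x, rfl⟩
  exact (Set.finite_range F).subset this

/-- (iii) implies (i) or (ii). -/
theorem stmt_8 {G : Type*} [Group G] (H : Subgroup G) [H.FiniteIndex]
    (h3 : ∃ g : G, g ∉ H ∧ g ≠ 1 ∧ IsOfFinOrder g ∧
      ∃ h ∈ H.normalCore, ∀ k ∈ H.normalCore, g⁻¹ * k * g = h⁻¹ * k * h) :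
    ¬ IsICC H ∨
      ∃ g' : G, g' ∉ H ∧ g' ≠ 1 ∧ IsOfFinOrder g' ∧
        ∀ k ∈ H.normalCore, g'⁻¹ * k * g' = k := by
  by_cases hicc : IsICC H
  · right
    obtain ⟨g, hgH, hg1, hgfin, h, hhN, hconj⟩ := h3
    have hhH : h ∈ H := H.normalCore_le hhN
    -- g and h commute
    have hgh : Commute g h := by
      have h1 : g⁻¹ * h * g = h := by
        have := hconj h hhN
        rw [this]; group
      exact (comm_of_conj h1).symm
    -- powers: (g^n)⁻¹ k g^n = (h^n)⁻¹ k h^n for k in the core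
    have hpow : ∀ (n : ℕ) (k : G), k ∈ H.normalCore →
        (g ^ n)⁻¹ * k * g ^ n = (h ^ n)⁻¹ * k * h ^ n := by
      intro n
      induction n with
      | zero => intro k hk; simp
      | succ n ih =>
        intro k hk
        have hk' : h⁻¹ * k * h ∈ H.normalCore := by
          have := (Subgroup.normalCore_normal H).conj_mem k hk h⁻¹
          simpa [mul_assoc] using this
        calc (g ^ (n+1))⁻¹ * k * g ^ (n+1)
            = (g ^ n)⁻¹ * (g⁻¹ * k * g) * g ^ n := by rw [pow_succ']; group
          _ = (g ^ n)⁻¹ * (h⁻¹ * k * h) * g ^ n := by rw [hconj k hk]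
          _ = (h ^ n)⁻¹ * (h⁻¹ * k * h) * h ^ n := ih _ hk'
          _ = (h ^ (n+1))⁻¹ * k * h ^ (n+1) := by rw [pow_succ']; group
    obtain ⟨m, hm, hgm⟩ := hgfin.exists_pow_eq_one
    -- z := h ^ m centralizes the core
    have hz : ∀ k ∈ H.normalCore, (h ^ m)⁻¹ * k * (h ^ m) = k := by
      intro k hk
      rw [← hpow m k hk, hgm]
      group
    have hzN : h ^ m ∈ H.normalCore := pow_mem hhN m
    have hzH : h ^ m ∈ H := H.normalCore_le hzN
    -- icc forces h ^ m = 1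
    have hz1 : h ^ m = 1 := by
      by_contra hne
      have hne' : (⟨h ^ m, hzH⟩ : H) ≠ 1 := by
        intro he
        exact hne (congrArg Subtype.val he)
      have hinf := hicc.2 _ hne'
      have hfin := conjClass_finite_of_centralizes H ⟨h ^ m, hzH⟩ hz
      exact hinf hfin
    have hhfin : IsOfFinOrder h := isOfFinOrder_iff_pow_eq_one.mpr ⟨m, hm, hz1⟩
    refine ⟨g * h⁻¹, ?_, ?_, ?_, ?_⟩
    · intro hmem
      exact hgH (by simpa [mul_assoc] using mul_mem hmem hhH)
    · intro he
      exact hgH ((mul_inv_eq_one.mp he) ▸ hhH)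
    · exact (hgh.inv_right).isOfFinOrder_mul hgfin hhfin.inv
    · intro k hk
      calc (g * h⁻¹)⁻¹ * k * (g * h⁻¹) = h * (g⁻¹ * k * g) * h⁻¹ := by group
        _ = h * (h⁻¹ * k * h) * h⁻¹ := by rw [hconj k hk]
        _ = k := by group
  · left; exact hicc
end

section
/- Let G be a group, H a subgroup of G of finite index, and N(H) = ⋂_{g ∈ G} g⁻¹Hg the normal core of H in G. If G is not icc, then either H is not icc, or there exists g ∈ G \ H with g ≠ 1 of finite order such that g⁻¹kg = k for all k ∈ N(H). -/
private lemma cc_conj {G : Type*} [Group G] (g y : G) :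
    {h : G | ∃ x : G, x⁻¹ * (y⁻¹ * g * y) * x = h} = {h : G | ∃ x : G, x⁻¹ * g * x = h} := by
  ext h
  constructor
  · rintro ⟨x, rfl⟩; exact ⟨y * x, by group⟩
  · rintro ⟨x, rfl⟩; exact ⟨y⁻¹ * x, by group⟩

private lemma cc_mul {G : Type*} [Group G] {a b : G}
    (ha : {h : G | ∃ x : G, x⁻¹ * a * x = h}.Finite)
    (hb : {h : G | ∃ x : G, x⁻¹ * b * x = h}.Finite) :
    {h : G | ∃ x : G, x⁻¹ * (a * b) * x = h}.Finite := by
  apply Set.Finite.subset ((ha.prod hb).image (fun p => p.1 * p.2))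
  rintro h ⟨x, rfl⟩
  exact ⟨(x⁻¹ * a * x, x⁻¹ * b * x), ⟨⟨x, rfl⟩, ⟨x, rfl⟩⟩, by group⟩

private lemma cc_inv {G : Type*} [Group G] {a : G}
    (ha : {h : G | ∃ x : G, x⁻¹ * a * x = h}.Finite) :
    {h : G | ∃ x : G, x⁻¹ * a⁻¹ * x = h}.Finite := by
  apply Set.Finite.subset (ha.image (fun p => p⁻¹))
  rintro h ⟨x, rfl⟩
  exact ⟨x⁻¹ * a * x, ⟨x, rfl⟩, by group⟩

private lemma cc_pow {G : Type*} [Group G] {a : G}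
    (ha : {h : G | ∃ x : G, x⁻¹ * a * x = h}.Finite) (n : ℕ) :
    {h : G | ∃ x : G, x⁻¹ * a ^ n * x = h}.Finite := by
  induction n with
  | zero =>
    apply Set.Finite.subset (Set.finite_singleton (1 : G))
    rintro h ⟨x, rfl⟩
    simp
  | succ n ih =>
    have := cc_mul ih ha
    rwa [← pow_succ] at this

/-- If H contains a nontrivial element with finite conjugacy class in G, then H is not icc. -/
private lemma not_icc_of_mem {G : Type*} [Group G] (H : Subgroup G) {g : G}
    (hgH : g ∈ H) (hg : g ≠ 1)
    (hfin : {h : G | ∃ x : G, x⁻¹ * g * x = h}.Finite) : ¬ IsICC H := by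
  rintro ⟨-, hicc⟩
  have hinf := hicc ⟨g, hgH⟩ (fun h => hg (congrArg Subtype.val h))
  apply Set.not_infinite.mpr ?_ hinf
  apply Set.Finite.of_finite_image (f := (Subtype.val : H → G))
  · apply hfin.subset
    rintro _ ⟨h, ⟨x, rfl⟩, rfl⟩
    exact ⟨(x : G), by push_cast; ring⟩
  · exact Subtype.val_injective.injOn

/-- G not icc implies (i) or (ii). -/
theorem stmt_10 {G : Type*} [Group G] (H : Subgroup G) [H.FiniteIndex]
    (hG : ¬ IsICC G) :
    ¬ IsICC H ∨
      ∃ g : G, g ∉ H ∧ g ≠ 1 ∧ IsOfFinOrder g ∧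
        ∀ k ∈ H.normalCore, g⁻¹ * k * g = k := by
  by_cases hNT : Nontrivial G
  · have hex : ∃ g : G, g ≠ 1 ∧ {h : G | ∃ x : G, x⁻¹ * g * x = h}.Finite := by
      by_contra h
      push_neg at h
      exact hG ⟨hNT, fun g hg => h g hg⟩
    obtain ⟨g, hg, hfin⟩ := hex
    by_cases hgH : g ∈ H
    · exact Or.inl (not_icc_of_mem H hgH hg hfin)
    by_cases hH : ∃ h : G, h ∈ H ∧ h ≠ 1 ∧ {h' : G | ∃ x : G, x⁻¹ * h * x = h'}.Finite
    · obtain ⟨h, h1, h2, h3⟩ := hH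
      exact Or.inl (not_icc_of_mem H h1 h2 h3)
    push_neg at hH
    have triv : ∀ h : G, h ∈ H → {h' : G | ∃ x : G, x⁻¹ * h * x = h'}.Finite → h = 1 := by
      intro h hmem hfin'
      by_contra hne
      exact hH h hmem hne hfin'
    right
    have hidx : H.normalCore.index ≠ 0 := Subgroup.FiniteIndex.index_ne_zero
    obtain ⟨n, hn, -, hgn⟩ := Subgroup.exists_pow_mem_of_index_ne_zero hidx g
    have hgn1 : g ^ n = 1 :=
      triv (g ^ n) (H.normalCore_le hgn) (cc_pow hfin n)
    refine ⟨g, hgH, hg, isOfFinOrder_iff_pow_eq_one.mpr ⟨n, hn, hgn1⟩, ?_⟩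
    intro k hk
    set c := g⁻¹ * (k⁻¹ * g * k) with hc
    have hcN : c ∈ H.normalCore := by
      have h1 : g⁻¹ * k⁻¹ * g⁻¹⁻¹ ∈ H.normalCore :=
        Subgroup.normalCore_normal H |>.conj_mem _ (inv_mem hk) g⁻¹
      have h2 : c = (g⁻¹ * k⁻¹ * g⁻¹⁻¹) * k := by rw [hc]; group
      rw [h2]
      exact mul_mem h1 hk
    have hcF : {h' : G | ∃ x : G, x⁻¹ * c * x = h'}.Finite := by
      apply cc_mul (cc_inv hfin)
      rw [cc_conj g k]
      exact hfin
    have hc1 : c = 1 := triv c (H.normalCore_le hcN) hcF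
    rw [hc] at hc1
    have h3 : k⁻¹ * g * k = g := (inv_mul_eq_one.mp hc1).symm
    have h4 : g * k = k * g := by
      have := congrArg (fun t => k * t) h3
      simpa [mul_assoc] using this
    calc g⁻¹ * k * g = g⁻¹ * (k * g) := by rw [mul_assoc]
      _ = g⁻¹ * (g * k) := by rw [h4]
      _ = k := by group
  · left
    rintro ⟨⟨a, b, hab⟩, -⟩
    exact hNT ⟨↑a, ↑b, fun h => hab (Subtype.val_injective h)⟩
end

section
/- Let G be a group, H a subgroup of G of finite index, and N(H) = ⋂_{g ∈ G} g⁻¹Hg the normal core of H in G. Then G is icc if and only if H is icc and there is no element g ∈ G \ H with g ≠ 1 of finite order commuting with every element of N(H) (i.e. G does not contain a subgroup of the form N(H) × ℤ_n with n > 1 containing N(H) as the first factor). -/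
section Aux

variable {G : Type*} [Group G]

/-- If the centralizer of `g` has finite index, then the conjugacy class of `g` is finite. -/
lemma cl_finite_of_centralizer_finiteIndex {g : G}
    (h : (Subgroup.centralizer {g}).index ≠ 0) :
    {h : G | ∃ x : G, x⁻¹ * g * x = h}.Finite := by
  set C := Subgroup.centralizer ({g} : Set G) with hC
  haveI : C.FiniteIndex := ⟨h⟩
  have wd : ∀ a b : G, (QuotientGroup.leftRel C).r a b →
      a * g * a⁻¹ = b * g * b⁻¹ := by
    intro a b hab
    rw [QuotientGroup.leftRel_apply] at hab
    have hcomm : g * (a⁻¹ * b) = (a⁻¹ * b) * g :=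
      (Subgroup.mem_centralizer_singleton_iff.mp hab).symm
    have : b = a * (a⁻¹ * b) := by group
    rw [this]
    have : a * (a⁻¹ * b) * g * (a * (a⁻¹ * b))⁻¹
        = a * ((a⁻¹ * b) * g * (a⁻¹ * b)⁻¹) * a⁻¹ := by group
    rw [this, ← hcomm]
    group
  let f : G ⧸ C → G := Quotient.lift (fun x : G => x * g * x⁻¹) wd
  have hsub : {h : G | ∃ x : G, x⁻¹ * g * x = h} ⊆ Set.range f := by
    rintro _ ⟨x, rfl⟩
    refine ⟨QuotientGroup.mk x⁻¹, ?_⟩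
    show x⁻¹ * g * x⁻¹⁻¹ = x⁻¹ * g * x
    group
  exact (Set.finite_range f).subset hsub

/-- If the conjugacy class of `g` under a finite-index subgroup `K` is finite, then the
centralizer of `g` has finite index in `G`. -/
lemma centralizer_finiteIndex_of_cl_finite {K : Subgroup G} [K.FiniteIndex] {g : G}
    (hfin : {h : G | ∃ x ∈ K, x⁻¹ * g * x = h}.Finite) :
    (Subgroup.centralizer {g}).index ≠ 0 := by
  set C := Subgroup.centralizer ({g} : Set G) with hC
  set C' : Subgroup K := (C ⊓ K).subgroupOf K with hC'
  have wd : ∀ a b : K, (QuotientGroup.leftRel C').r a b →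
      (a : G) * g * (a : G)⁻¹ = (b : G) * g * (b : G)⁻¹ := by
    intro a b hab
    rw [QuotientGroup.leftRel_apply] at hab
    have hmem : ((a⁻¹ * b : K) : G) ∈ C ⊓ K := Subgroup.mem_subgroupOf.mp hab
    have hcomm : g * ((a : G)⁻¹ * b) = ((a : G)⁻¹ * b) * g := by
      have := (Subgroup.mem_centralizer_singleton_iff.mp hmem.1).symm
      simpa using this
    have hb : (b : G) = (a : G) * ((a : G)⁻¹ * b) := by group
    rw [hb]
    have : (a : G) * ((a : G)⁻¹ * b) * g * ((a : G) * ((a : G)⁻¹ * b))⁻¹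
        = (a : G) * (((a : G)⁻¹ * b) * g * ((a : G)⁻¹ * b)⁻¹) * (a : G)⁻¹ := by group
    rw [this, ← hcomm]
    group
  let f : K ⧸ C' → G := Quotient.lift (fun x : K => (x : G) * g * (x : G)⁻¹) wd
  have hinj : Function.Injective f := by
    intro q₁ q₂
    induction q₁ using Quotient.inductionOn with | h a =>
    induction q₂ using Quotient.inductionOn with | h b =>
    intro hab
    have hab' : (a : G) * g * (a : G)⁻¹ = (b : G) * g * (b : G)⁻¹ := hab
    refine Quotient.sound (QuotientGroup.leftRel_apply.mpr
      (Subgroup.mem_subgroupOf.mpr ⟨Subgroup.mem_centralizer_singleton_iff.mpr ?_,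
        SetLike.coe_mem _⟩))
    push_cast
    have : ((a : G)⁻¹ * b) * g = (a:G)⁻¹ * ((↑b) * g * (↑b)⁻¹) * b := by group
    rw [this, ← hab']
    group
  have hrange : ∀ q : K ⧸ C', f q ∈ {h : G | ∃ x ∈ K, x⁻¹ * g * x = h} := by
    intro q
    induction q using Quotient.inductionOn with | h a =>
    refine ⟨(a : G)⁻¹, inv_mem a.2, ?_⟩
    show (a:G)⁻¹⁻¹ * g * (a:G)⁻¹ = (a:G) * g * (a:G)⁻¹
    rw [inv_inv]
  haveI := hfin.to_subtype
  haveI : Finite (K ⧸ C') := by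
    refine Finite.of_injective
      (fun q => (⟨f q, hrange q⟩ : {h : G | ∃ x ∈ K, x⁻¹ * g * x = h})) ?_
    intro q₁ q₂ h
    exact hinj (congrArg Subtype.val h)
  have h1 : C'.index ≠ 0 := Subgroup.index_ne_zero_of_finite
  have h2 : (C ⊓ K).index ≠ 0 := by
    rw [← Subgroup.relIndex_mul_index (inf_le_right : C ⊓ K ≤ K)]
    exact mul_ne_zero h1 Subgroup.FiniteIndex.index_ne_zero
  intro h0
  exact h2 (Nat.eq_zero_of_zero_dvd (h0 ▸ Subgroup.index_dvd_of_le inf_le_left) )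

/-- The image in `G` of the conjugacy class of an element of a subgroup. -/
lemma image_cl (K : Subgroup G) (h : K) :
    ((↑) : K → G) '' {k : K | ∃ x : K, x⁻¹ * h * x = k}
      = {k : G | ∃ x ∈ K, x⁻¹ * (h : G) * x = k} := by
  ext k
  constructor
  · rintro ⟨k', ⟨x, rfl⟩, rfl⟩
    exact ⟨(x : G), x.2, by push_cast; ring_nf⟩
  · rintro ⟨x, hx, rfl⟩
    have hk : (x : G)⁻¹ * (h : G) * x ∈ K := by
      exact mul_mem (mul_mem (inv_mem hx) h.2) hx
    exact ⟨⟨_, hk⟩, ⟨⟨x, hx⟩, rfl⟩, rfl⟩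

lemma cl_mul_finite {a b : G}
    (ha : {h : G | ∃ x : G, x⁻¹ * a * x = h}.Finite)
    (hb : {h : G | ∃ x : G, x⁻¹ * b * x = h}.Finite) :
    {h : G | ∃ x : G, x⁻¹ * (a * b) * x = h}.Finite := by
  apply (ha.mul hb).subset
  rintro _ ⟨x, rfl⟩
  have : x⁻¹ * (a * b) * x = (x⁻¹ * a * x) * (x⁻¹ * b * x) := by group
  rw [this]
  exact Set.mul_mem_mul ⟨x, rfl⟩ ⟨x, rfl⟩

lemma cl_inv_finite {a : G}
    (ha : {h : G | ∃ x : G, x⁻¹ * a * x = h}.Finite) :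
    {h : G | ∃ x : G, x⁻¹ * a⁻¹ * x = h}.Finite := by
  apply (ha.image fun y => y⁻¹).subset
  rintro _ ⟨x, rfl⟩
  exact ⟨x⁻¹ * a * x, ⟨x, rfl⟩, by group⟩

lemma cl_conj_finite {a k : G}
    (ha : {h : G | ∃ x : G, x⁻¹ * a * x = h}.Finite) :
    {h : G | ∃ x : G, x⁻¹ * (k⁻¹ * a * k) * x = h}.Finite := by
  apply ha.subset
  rintro _ ⟨x, rfl⟩
  exact ⟨k * x, by group⟩

lemma cl_pow_finite {a : G} (m : ℕ)
    (ha : {h : G | ∃ x : G, x⁻¹ * a * x = h}.Finite) :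
    {h : G | ∃ x : G, x⁻¹ * a ^ m * x = h}.Finite := by
  apply (ha.image fun y => y ^ m).subset
  rintro _ ⟨x, rfl⟩
  refine ⟨x⁻¹ * a * x, ⟨x, rfl⟩, ?_⟩
  show (x⁻¹ * a * x) ^ m = x⁻¹ * a ^ m * x
  calc (x⁻¹ * a * x) ^ m = (x⁻¹ * a * x⁻¹⁻¹) ^ m := by rw [inv_inv]
    _ = x⁻¹ * a ^ m * x⁻¹⁻¹ := conj_pow
    _ = x⁻¹ * a ^ m * x := by rw [inv_inv]

end Aux

/-- Corollary 1: G is icc iff H is icc and no nontrivial torsion element outside H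
commutes with every element of the normal core of H. -/
theorem stmt_11 {G : Type*} [Group G] (H : Subgroup G) [H.FiniteIndex] :
    IsICC G ↔
      IsICC H ∧
        ¬ ∃ g : G, g ∉ H ∧ g ≠ 1 ∧ IsOfFinOrder g ∧
          ∀ k ∈ H.normalCore, g * k = k * g := by
  set N := H.normalCore with hN
  haveI : N.Normal := by rw [hN]; infer_instance
  haveI : N.FiniteIndex := by rw [hN]; infer_instance
  constructor
  · rintro ⟨hnt, hicc⟩
    constructor
    · constructor
      · -- H is nontrivial
        by_contra hH
        rw [not_nontrivial_iff_subsingleton] at hH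
        have hbot : H = ⊥ := by
          ext x
          simp only [Subgroup.mem_bot]
          constructor
          · intro hx
            have : (⟨x, hx⟩ : H) = 1 := Subsingleton.elim _ _
            simpa using congrArg Subtype.val this
          · rintro rfl; exact one_mem H
        have : Finite G := by
          have : (⊥ : Subgroup G).index ≠ 0 := hbot ▸ Subgroup.FiniteIndex.index_ne_zero
          rw [Subgroup.index_bot] at this
          exact Nat.finite_of_card_ne_zero this
        obtain ⟨g, hg⟩ := exists_ne (1 : G)
        exact hicc g hg (Set.toFinite _)
      · -- classes in H are infinite
        intro h hh1
        have hh1' : (h : G) ≠ 1 := fun e => hh1 (OneMemClass.coe_eq_one.mp e)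
        by_contra hfin
        rw [Set.not_infinite] at hfin
        have himg : {k : G | ∃ x ∈ H, x⁻¹ * (h : G) * x = k}.Finite := by
          rw [← image_cl H h]
          exact hfin.image _
        have := cl_finite_of_centralizer_finiteIndex
          (centralizer_finiteIndex_of_cl_finite (K := H) himg)
        exact hicc h hh1' this
    · -- no forbidden element
      rintro ⟨g, _, hg1, _, hcomm⟩
      have wd : ∀ a b : G, (QuotientGroup.leftRel N).r a b →
          a⁻¹ * g * a = b⁻¹ * g * b := by
        intro a b hab
        rw [QuotientGroup.leftRel_apply] at hab
        have hm : a * (a⁻¹ * b) * a⁻¹ ∈ N := Subgroup.Normal.conj_mem ‹N.Normal› _ hab a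
        have hc := hcomm _ hm
        have hb : b = a * (a⁻¹ * b) := by group
        rw [hb]
        have key : (a * (a⁻¹ * b))⁻¹ * g * (a * (a⁻¹ * b))
            = a⁻¹ * ((a * (a⁻¹ * b) * a⁻¹)⁻¹ * g * (a * (a⁻¹ * b) * a⁻¹)) * a := by
          group
        have h2 : (a * (a⁻¹ * b) * a⁻¹)⁻¹ * g * (a * (a⁻¹ * b) * a⁻¹) = g := by
          rw [mul_assoc, hc]
          group
        rw [key, h2]
      let f : G ⧸ N → G := Quotient.lift (fun x : G => x⁻¹ * g * x) wd
      have hsub : {h : G | ∃ x : G, x⁻¹ * g * x = h} ⊆ Set.range f := by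
        rintro _ ⟨x, rfl⟩
        exact ⟨QuotientGroup.mk x, rfl⟩
      exact hicc g hg1 ((Set.finite_range f).subset hsub)
  · rintro ⟨⟨hntH, hiccH⟩, hno⟩
    have key : ∀ a : G, a ∈ H → a ≠ 1 →
        ¬ {h : G | ∃ x : G, x⁻¹ * a * x = h}.Finite := by
      intro a haH ha1 hfin
      have ha1' : (⟨a, haH⟩ : H) ≠ 1 :=
        fun e => ha1 (by simpa using congrArg Subtype.val e)
      have hinf := hiccH ⟨a, haH⟩ ha1'
      have himg : {k : G | ∃ x ∈ H, x⁻¹ * a * x = k}.Infinite := by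
        rw [← image_cl H ⟨a, haH⟩]
        exact hinf.image (Set.injOn_of_injective Subtype.val_injective)
      exact himg (hfin.subset (fun k ⟨x, _, hx⟩ => ⟨x, hx⟩))
    constructor
    · obtain ⟨x, hx⟩ := exists_ne (1 : H)
      exact ⟨(x : G), 1, fun e => hx (OneMemClass.coe_eq_one.mp e)⟩
    · intro g hg1
      by_contra hinf'
      have hinf : {h : G | ∃ x : G, x⁻¹ * g * x = h}.Finite := Set.not_infinite.mp hinf'
      -- g is not in H
      have hgH : g ∉ H := fun hgH => key g hgH hg1 hinf
      -- g commutes with N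
      have hcomm : ∀ k ∈ N, g * k = k * g := by
        intro k hk
        set c := g⁻¹ * (k⁻¹ * g * k) with hc
        have hcH : c ∈ H := by
          have h1 : g⁻¹ * k⁻¹ * g ∈ N := by
            have := Subgroup.Normal.conj_mem ‹N.Normal› _ (inv_mem hk) g⁻¹
            simpa using this
          have : c = (g⁻¹ * k⁻¹ * g) * k := by rw [hc]; group
          rw [this]
          exact H.normalCore_le (mul_mem h1 hk)
        have hcfin : {h : G | ∃ x : G, x⁻¹ * c * x = h}.Finite :=
          cl_mul_finite (cl_inv_finite hinf) (cl_conj_finite hinf)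
        have hc1 : c = 1 := by
          by_contra hc1
          exact key c hcH hc1 hcfin
        have : k⁻¹ * g * k = g := by
          have := hc1
          rw [hc] at this
          group at this ⊢
          simpa [mul_assoc] using congrArg (fun y => g * y) this
        calc g * k = k * (k⁻¹ * g * k) := by group
          _ = k * g := by rw [this]
      -- g has finite order
      have hord : IsOfFinOrder g := by
        have : IsOfFinOrder (QuotientGroup.mk g : G ⧸ N) := isOfFinOrder_of_finite _
        obtain ⟨m, hm, hgm⟩ := isOfFinOrder_iff_pow_eq_one.mp this
        have hgmN : g ^ m ∈ N := by
          rw [← QuotientGroup.eq_one_iff]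
          exact hgm
        have hpowfin := cl_pow_finite m hinf
        have : g ^ m = 1 := by
          by_contra hne
          exact key (g ^ m) (H.normalCore_le hgmN) hne hpowfin
        exact isOfFinOrder_iff_pow_eq_one.mpr ⟨m, hm, this⟩
      exact hno ⟨g, hgH, hg1, hord, hcomm⟩
end

section
/- Let G be a group and K a normal subgroup of G of index 2. Then G is icc if and only if K is icc and for every g ∈ G \ K there is no h ∈ K with g⁻¹kg = h⁻¹kh for all k ∈ K (equivalently, K is icc and the natural homomorphism G/K ≅ ℤ/2 → Out(K) is injective). -/
/-- For an index-2 normal subgroup K, G is icc iff K is icc and no g ∉ K acts on K as an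
inner automorphism of K. -/
theorem stmt_16 {G : Type*} [Group G] (K : Subgroup G) [K.Normal] (hK : K.index = 2) :
    IsICC G ↔
      IsICC K ∧
        ∀ g : G, g ∉ K → ¬ ∃ h ∈ K, ∀ k ∈ K, g⁻¹ * k * g = h⁻¹ * k * h := by
  constructor
  · rintro ⟨hGnt, hGicc⟩
    have hKne : ∃ g : G, g ∉ K := by
      by_contra h
      push_neg at h
      have : K = ⊤ := (Subgroup.eq_top_iff' K).2 h
      rw [this, Subgroup.index_top] at hK
      omega
    obtain ⟨g0, hg0⟩ := hKne
    refine ⟨⟨?_, ?_⟩, ?_⟩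
    · -- K is nontrivial
      by_contra hnt
      rw [not_nontrivial_iff_subsingleton] at hnt
      have hbot : K = ⊥ := by
        rw [Subgroup.eq_bot_iff_forall]
        intro x hx
        have : (⟨x, hx⟩ : ↥K) = 1 := Subsingleton.elim _ _
        simpa using congrArg Subtype.val this
      rw [hbot, Subgroup.index_bot] at hK
      have hfinG : Finite G := by
        by_contra hf
        rw [not_finite_iff_infinite] at hf
        have := Nat.card_eq_zero_of_infinite (α := G)
        omega
      obtain ⟨x, hx⟩ := exists_ne (1 : G)
      exact hGicc x hx (Set.toFinite _)
    · -- K-conjugacy classes are infinite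
      intro k hk1
      have hkg1 : (k : G) ≠ 1 := fun e => hk1 (by simpa using Subtype.ext e)
      have hSg := hGicc (k : G) hkg1
      set A : Set G := {h | ∃ x ∈ K, x⁻¹ * (k : G) * x = h} with hA
      have hsub : {h : G | ∃ x : G, x⁻¹ * (k : G) * x = h} ⊆
          A ∪ (fun a => g0⁻¹ * a * g0) '' A := by
        rintro h ⟨x, rfl⟩
        by_cases hx : x ∈ K
        · exact Or.inl ⟨x, hx, rfl⟩
        · refine Or.inr ⟨(x * g0⁻¹)⁻¹ * (k : G) * (x * g0⁻¹), ⟨x * g0⁻¹, ?_, rfl⟩, by group⟩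
          rw [Subgroup.mul_mem_iff_of_index_two hK]
          simp [hx, hg0]
      have hAinf : A.Infinite := by
        by_contra hfin
        rw [Set.not_infinite] at hfin
        exact hSg (Set.Finite.subset (hfin.union (hfin.image _)) hsub)
      have hsub2 : A ⊆ (fun x : ↥K => (x : G)) '' {h : ↥K | ∃ x : ↥K, x⁻¹ * k * x = h} := by
        rintro h ⟨x, hx, rfl⟩
        exact ⟨⟨x⁻¹ * (k : G) * x, mul_mem (mul_mem (inv_mem hx) k.2) hx⟩, ⟨⟨x, hx⟩, rfl⟩, rfl⟩
      exact Set.Infinite.of_image _ (hAinf.mono hsub2)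
    · -- no g ∉ K acts as an inner automorphism of K
      rintro g hg ⟨h, hh, hconj⟩
      set c := g * h⁻¹ with hc
      have hc1 : c ≠ 1 := by
        intro e
        rw [hc, mul_inv_eq_one] at e
        exact hg (e ▸ hh)
      have hcK : c ∉ K := by
        intro hcK
        have := mul_mem hcK hh
        rw [hc, mul_assoc, inv_mul_cancel, mul_one] at this
        exact hg this
      have key : ∀ x ∈ K, c * x * c⁻¹ = x := by
        intro x hx
        have h1 := hconj x hx
        calc c * x * c⁻¹ = g * (h⁻¹ * x * h) * g⁻¹ := by rw [hc]; group
          _ = g * (g⁻¹ * x * g) * g⁻¹ := by rw [h1]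
          _ = x := by group
      have central : ∀ x : G, x⁻¹ * c * x = c := by
        intro x
        by_cases hx : x ∈ K
        · have hcx : c * x = x * c := by
            conv_rhs => rw [← key x hx]
            group
          simp [mul_assoc, hcx]
        · have hm : c⁻¹ * x ∈ K := by
            rw [Subgroup.mul_mem_iff_of_index_two hK]
            simp [hx, hcK]
          have h2 := key _ hm
          have h3 : x * c⁻¹ = c⁻¹ * x := by rw [← h2]; group
          have hcx : c * x = x * c := by
            calc c * x = c * (x * c⁻¹) * c := by group
              _ = c * (c⁻¹ * x) * c := by rw [h3]
              _ = x * c := by group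
          simp [mul_assoc, hcx]
      have hset : {h' : G | ∃ x : G, x⁻¹ * c * x = h'} = {c} := by
        ext y
        constructor
        · rintro ⟨x, rfl⟩
          exact central x
        · rintro rfl
          exact ⟨1, central 1⟩
      have h3 := hGicc c hc1
      rw [hset] at h3
      exact h3 (Set.finite_singleton c)
  · rintro ⟨⟨hKnt, hKicc⟩, hout⟩
    obtain ⟨k0, hk0⟩ := exists_ne (1 : ↥K)
    have hk0G : ((k0 : G)) ≠ 1 := fun e => hk0 (by simpa using Subtype.ext e)
    refine ⟨⟨k0, 1, hk0G⟩, ?_⟩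
    intro g hg1
    by_cases hgK : g ∈ K
    · have hk := hKicc ⟨g, hgK⟩ (fun e => hg1 (by simpa using congrArg Subtype.val e))
      have hsub : (fun x : ↥K => (x : G)) '' {h : ↥K | ∃ x : ↥K, x⁻¹ * ⟨g, hgK⟩ * x = h} ⊆
          {h : G | ∃ x : G, x⁻¹ * g * x = h} := by
        rintro y ⟨h, ⟨x, hx⟩, rfl⟩
        refine ⟨(x : G), ?_⟩
        have hcoe := congrArg Subtype.val hx
        push_cast at hcoe
        exact hcoe
      exact ((hk.image Subtype.coe_injective.injOn).mono hsub)
    · by_contra hfin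
      rw [Set.not_infinite] at hfin
      set S := {h : G | ∃ x : G, x⁻¹ * g * x = h} with hS
      have hkey : ∀ k ∈ K, g⁻¹ * k * g = k := by
        intro k hk
        by_contra hne
        set w : G := g⁻¹ * k * g * k⁻¹ with hw
        have hwK : w ∈ K := by
          rw [hw]
          refine mul_mem ?_ (inv_mem hk)
          have := (inferInstance : K.Normal).conj_mem k hk g⁻¹
          simpa using this
        have hw1 : w ≠ 1 := by
          intro e
          rw [hw, mul_inv_eq_one] at e
          exact hne e
        have hwicc := hKicc ⟨w, hwK⟩ (fun e => hw1 (by simpa using congrArg Subtype.val e))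
        have himg : (fun x : ↥K => (x : G)) '' {h : ↥K | ∃ x : ↥K, x⁻¹ * ⟨w, hwK⟩ * x = h} ⊆
            (fun p : G × G => p.1⁻¹ * p.2) '' (S ×ˢ S) := by
          rintro y ⟨h, ⟨x, hx⟩, rfl⟩
          refine ⟨((x : G)⁻¹ * g * (x : G), (x : G)⁻¹ * (k * g * k⁻¹) * (x : G)),
            ⟨⟨(x : G), rfl⟩, ⟨k⁻¹ * (x : G), by group⟩⟩, ?_⟩
          have hcoe := congrArg Subtype.val hx
          push_cast at hcoe
          show ((x : G)⁻¹ * g * (x : G))⁻¹ * ((x : G)⁻¹ * (k * g * k⁻¹) * (x : G)) = (h : G)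
          rw [← hcoe, hw]
          group
        have hfin2 : ((fun p : G × G => p.1⁻¹ * p.2) '' (S ×ˢ S)).Finite :=
          (hfin.prod hfin).image _
        exact ((hwicc.image Subtype.coe_injective.injOn).mono himg) hfin2
      exact hout g hgK ⟨1, one_mem K, fun k hk => by simpa using hkey k hk⟩
end
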